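/- Let N ≥ 2 and let r be an ultrametric on {1,…,N} with r(i,j) > 0 for i ≠ j, whose enumeration is length-minimal. Define the depths d_n(r) := (1/2)·max_{1 ≤ i,j ≤ n} r(i,j) for 1 ≤ n ≤ N (so d_1(r) = 0). Then for every n with 2 ≤ n ≤ N: d_n(r) = (1/2)·( d_{n−1}(r) + max( ℓ_n(r) − ℓ_{n−1}(r), d_{n−1}(r) ) ). -/

import Mathlib

open Finset

/-- `r` is an ultrametric matrix on `{1,…,N}` (encoded by `Fin N`): nonnegative,
symmetric, vanishing on the diagonal, and satisfying the strong triangle inequality. -/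
def IsUltramat {N : ℕ} (r : Fin N → Fin N → ℝ) : Prop :=
  (∀ i j, 0 ≤ r i j) ∧ (∀ i j, r i j = r j i) ∧ (∀ i, r i i = 0) ∧
    (∀ i j k, r i k ≤ max (r i j) (r j k))

/-- `ell r n` is the total length `ℓ_n(r)` of the subtree spanned by the first `n`
points: half the minimum of `Σ_{i=1}^n r(i,σ(i))` over single-`n`-cycle permutations `σ`
of `{1,…,n}`, for `2 ≤ n ≤ N`; and `0` otherwise (in particular `ℓ_1(r) = 0`). -/
noncomputable def ell {N : ℕ} (r : Fin N → Fin N → ℝ) (n : ℕ) : ℝ :=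
  if h : 2 ≤ n ∧ n ≤ N then
    (1 / 2) * sInf { x : ℝ | ∃ σ : Equiv.Perm (Fin n), σ.IsCycle ∧ σ.support = Finset.univ ∧
      x = ∑ i : Fin n, r (Fin.castLE h.2 i) (Fin.castLE h.2 (σ i)) }
  else 0

/-- The enumeration of the points of `r` is length-minimal: for every permutation `τ` of
`{1,…,N}`, the vector `(ℓ_1(r),…,ℓ_N(r))` is lexicographically at most
`(ℓ_1(r^τ),…,ℓ_N(r^τ))`, where `r^τ(i,j) = r(τ(i),τ(j))`. -/
def LengthMinimal {N : ℕ} (r : Fin N → Fin N → ℝ) : Prop :=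
  ∀ τ : Equiv.Perm (Fin N),
    (∀ n, n ≤ N → ell r n = ell (fun i j => r (τ i) (τ j)) n) ∨
    (∃ n, n ≤ N ∧ (∀ m, m < n → ell r m = ell (fun i j => r (τ i) (τ j)) m) ∧
      ell r n < ell (fun i j => r (τ i) (τ j)) n)

/-- `depthFn r n` is the depth `d_n(r) = (1/2)·max_{1 ≤ i,j ≤ n} r(i,j)` of the subtree
spanned by the first `n` points, for `1 ≤ n ≤ N`; and `0` otherwise. -/
noncomputable def depthFn {N : ℕ} (r : Fin N → Fin N → ℝ) (n : ℕ) : ℝ :=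
  if h : 1 ≤ n ∧ n ≤ N then
    (1 / 2) * sSup { x : ℝ | ∃ i j : Fin n, x = r (Fin.castLE h.2 i) (Fin.castLE h.2 j) }
  else 0

/-!
The new point `n` lies at distance `a = min_{j<n} r(j,n)` from the earlier points, and by the
ultrametric inequality every earlier point lies within `max(a, 2d_{n-1})` of it, so
`2d_n = max(2d_{n-1}, a)`. A Hamiltonian cycle through the first `n` points is a cycle through
the first `n-1` points with `n` inserted between two of them, `p` and `s`, at the cost
`r(p,n) + r(n,s) - r(p,s)`. This cost is never below `a + max(a, 2d_{n-1}) - 2d_{n-1}`, and any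
cycle on the first `n-1` points has an edge where inserting `n` costs no more. Hence
`2(ℓ_n - ℓ_{n-1}) = a + max(a, 2d_{n-1}) - 2d_{n-1}`, and the recursion follows by comparing
`a` with `2d_{n-1}`.
-/

open Equiv Equiv.Perm

namespace Equiv.Perm

variable {α β : Type*}

theorem IsCycle.forall_of_apply_closed [Fintype α] [DecidableEq α] {σ : Perm α}
    (hc : σ.IsCycle) (hs : σ.support = univ) {P : α → Prop} (hP : ∀ x, P x → P (σ x))
    {x : α} (hx : P x) (y : α) : P y := by
  obtain ⟨k, rfl⟩ := hc.exists_pow_eq (mem_support.mp (hs ▸ mem_univ x))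
    (mem_support.mp (hs ▸ mem_univ y))
  induction k with
  | zero => exact hx
  | succ k ih => rw [pow_succ', mul_apply]; exact hP _ ih

theorem IsCycle.swap_mul_of_apply_eq_self [Finite α] [DecidableEq α] {f : Perm α}
    (hf : f.IsCycle) {x y : α} (hx : f x = x) (hy : f y ≠ y) : (swap x y * f).IsCycle := by
  have hxy : x ≠ y := fun h => hy (h ▸ hx)
  set g := swap x y * f
  have hgx : g x = y := by simp [g, hx]
  -- `g` runs `x ↦ y ↦ f y ↦ f² y ↦ ⋯`, returning to `x` where `f` would return to `y`.
  have horbit : ∀ k : ℕ, g.SameCycle x ((f ^ k) y) := by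
    intro k
    induction k with
    | zero => exact ⟨1, by simpa using hgx⟩
    | succ k ih =>
      rw [pow_succ', mul_apply]
      by_cases hw : f ((f ^ k) y) = y
      · rw [hw]; exact ⟨1, by simpa using hgx⟩
      have hwx : f ((f ^ k) y) ≠ x := fun h => hxy ((f ^ (k + 1)).injective <| by
        rw [pow_apply_eq_self_of_apply_eq_self hx, pow_succ', mul_apply, h]).symm
      exact ih.trans ⟨1, by simp [g, swap_apply_of_ne_of_ne hwx hw]⟩
  refine ⟨x, by rw [hgx]; exact hxy.symm, fun z hz => ?_⟩
  by_cases hzx : z = x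
  · rw [hzx]
  have hfz : f z ≠ z := by
    intro h
    have hzy : z ≠ y := by rintro rfl; exact hy h
    exact hz (by simp [g, h, swap_apply_of_ne_of_ne hzx hzy])
  obtain ⟨k, rfl⟩ := hf.exists_pow_eq hy hfz
  exact horbit k

theorem support_swap_mul_of_apply_eq_self [Fintype α] [DecidableEq α] {f : Perm α} {x y : α}
    (hx : f x = x) (hy : f y ≠ y) : (swap x y * f).support = insert x f.support := by
  ext z
  simp only [mem_support, mem_insert, mul_apply, swap_apply_def]
  have : f z = x → z = x := fun h => f.injective (h.trans hx.symm)
  grind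

theorem isCycle_viaEmbedding_iff [Fintype α] [DecidableEq α] [Fintype β] [DecidableEq β]
    (e : Perm α) (ι : α ↪ β) : (e.viaEmbedding ι).IsCycle ↔ e.IsCycle := by
  classical
  unfold viaEmbedding
  rw [← card_cycleType_eq_one, ← card_cycleType_eq_one (σ := e)]
  convert Iff.rfl using 3
  exact (@cycleType_extendDomain _ _ _ _ _ _ _ (Classical.decPred _) _ e).symm

theorem support_viaEmbedding [Fintype α] [DecidableEq α] [Fintype β] [DecidableEq β]
    (e : Perm α) (ι : α ↪ β) : (e.viaEmbedding ι).support = e.support.map ι := by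
  ext z
  by_cases hz : z ∈ Set.range ι
  · obtain ⟨a, rfl⟩ := hz
    simp [viaEmbedding_apply]
  · rw [mem_support, viaEmbedding_apply_of_notMem e ι z hz]
    simp only [ne_eq, not_true_eq_false, mem_map, false_iff, not_exists, not_and]
    exact fun a _ h => hz ⟨a, h⟩

end Equiv.Perm

theorem Fin.map_castSuccEmb_univ {m : ℕ} :
    (univ : Finset (Fin m)).map castSuccEmb = univ.erase (last m) := by
  rw [univ_castSuccEmb, erase_cons]

namespace Equiv.Perm

open Fin

variable {m : ℕ}

theorem viaEmbedding_castSuccEmb_last (σ : Perm (Fin m)) :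
    σ.viaEmbedding castSuccEmb (last m) = last m :=
  viaEmbedding_apply_of_notMem _ _ _ fun ⟨z, hz⟩ => castSucc_ne_last z hz

theorem exists_viaEmbedding_castSuccEmb_eq {τ : Perm (Fin (m + 1))} (hτ : τ (last m) = last m) :
    ∃ σ : Perm (Fin m), σ.viaEmbedding castSuccEmb = τ := by
  have hτ' : τ⁻¹ (last m) = last m := by rw [inv_eq_iff_eq, hτ]
  have hne : ∀ (π : Perm (Fin (m + 1))), π (last m) = last m → ∀ z : Fin m,
      π z.castSucc ≠ last m := fun π hπ z h =>
    castSucc_ne_last z (π.injective (h.trans hπ.symm))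
  refine ⟨⟨fun z => (τ z.castSucc).castPred (hne τ hτ z),
    fun z => (τ⁻¹ z.castSucc).castPred (hne τ⁻¹ hτ' z), fun z => ?_, fun z => ?_⟩, ?_⟩
  · simp
  · simp
  · ext1 x
    induction x using lastCases with
    | last => rw [viaEmbedding_castSuccEmb_last, hτ]
    | cast z => exact (viaEmbedding_apply _ castSuccEmb z).trans (castSucc_castPred _ (hne τ hτ z))

/-- Insert the point `last m` into `σ` right after `i`. -/
noncomputable def insertLast (σ : Perm (Fin m)) (i : Fin m) : Perm (Fin (m + 1)) :=
  swap (last m) (σ i).castSucc * σ.viaEmbedding castSuccEmb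

variable (σ : Perm (Fin m)) (i : Fin m)

theorem insertLast_last : insertLast σ i (last m) = (σ i).castSucc := by
  simp [insertLast, viaEmbedding_castSuccEmb_last]

theorem insertLast_castSucc_self : insertLast σ i i.castSucc = last m := by
  simp [insertLast, ← coe_castSuccEmb, viaEmbedding_apply]

theorem insertLast_castSucc_of_ne {z : Fin m} (hz : z ≠ i) :
    insertLast σ i z.castSucc = (σ z).castSucc := by
  rw [insertLast, mul_apply, ← coe_castSuccEmb, viaEmbedding_apply, coe_castSuccEmb]
  exact swap_apply_of_ne_of_ne (castSucc_ne_last _)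
    (fun h => hz (σ.injective (castSucc_injective m h)))

theorem sum_insertLast {M : Type*} [AddCommGroup M] (g : Fin (m + 1) → Fin (m + 1) → M) :
    ∑ x, g x (insertLast σ i x) = ∑ z, g z.castSucc (σ z).castSucc
      + (g i.castSucc (last m) + g (last m) (σ i).castSucc - g i.castSucc (σ i).castSucc) := by
  have hdiff : ∑ z, (g z.castSucc (insertLast σ i z.castSucc) - g z.castSucc (σ z).castSucc)
      = g i.castSucc (last m) - g i.castSucc (σ i).castSucc := by
    rw [sum_eq_single i (fun z _ hz => by rw [insertLast_castSucc_of_ne σ i hz, sub_self])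
      (by simp), insertLast_castSucc_self]
  rw [sum_sub_distrib, sub_eq_iff_eq_add] at hdiff
  rw [sum_univ_castSucc, insertLast_last, hdiff]
  abel

variable {σ}

theorem viaEmbedding_castSuccEmb_apply_ne (hs : σ.support = univ) (z : Fin m) :
    σ.viaEmbedding castSuccEmb z.castSucc ≠ z.castSucc := by
  rw [← coe_castSuccEmb, viaEmbedding_apply, coe_castSuccEmb, Ne, castSucc_inj]
  exact mem_support.mp (hs ▸ mem_univ _)

theorem isCycle_insertLast (hc : σ.IsCycle) (hs : σ.support = univ) :
    (insertLast σ i).IsCycle :=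
  ((isCycle_viaEmbedding_iff σ castSuccEmb).mpr hc).swap_mul_of_apply_eq_self
    (viaEmbedding_castSuccEmb_last σ) (viaEmbedding_castSuccEmb_apply_ne hs _)

theorem support_insertLast (hs : σ.support = univ) : (insertLast σ i).support = univ := by
  rw [insertLast, support_swap_mul_of_apply_eq_self (viaEmbedding_castSuccEmb_last σ)
    (viaEmbedding_castSuccEmb_apply_ne hs _), support_viaEmbedding, hs, Fin.map_castSuccEmb_univ,
    insert_erase (mem_univ _)]

theorem exists_eq_insertLast (hm : 2 ≤ m) {σ : Perm (Fin (m + 1))} (hc : σ.IsCycle)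
    (hs : σ.support = univ) :
    ∃ σ' : Perm (Fin m), σ'.IsCycle ∧ σ'.support = univ ∧ ∃ i, σ = insertLast σ' i := by
  have hx : σ (last m) ≠ last m := mem_support.mp (hs ▸ mem_univ _)
  have hxx : σ (σ (last m)) ≠ last m := by
    intro h
    have := card_support_swap hx.symm
    rw [← hc.eq_swap_of_apply_apply_eq_self hx h, hs, card_univ, Fintype.card_fin] at this
    omega
  obtain ⟨σ', hσ'⟩ := exists_viaEmbedding_castSuccEmb_eq (τ := swap (last m) (σ (last m)) * σ)
    (by simp)
  obtain ⟨s, hsx⟩ := exists_castSucc_eq.mpr hx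
  refine ⟨σ', (isCycle_viaEmbedding_iff σ' castSuccEmb).mp (hσ' ▸ hc.swap_mul hx hxx), ?_,
    σ'⁻¹ s, ?_⟩
  · apply map_injective castSuccEmb
    rw [← support_viaEmbedding, hσ', support_swap_mul_eq _ _ hxx, hs, Fin.map_castSuccEmb_univ,
      sdiff_singleton_eq_erase]
  · rw [insertLast, show σ' (σ'⁻¹ s) = s by simp, hσ', hsx, swap_mul_self_mul]

end Equiv.Perm

section Spec

variable {N : ℕ} (r : Fin N → Fin N → ℝ)

theorem isLeast_two_mul_ell {n : ℕ} (h2 : 2 ≤ n) (hN : n ≤ N) :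
    IsLeast {x | ∃ σ : Perm (Fin n), σ.IsCycle ∧ σ.support = univ ∧
      x = ∑ i, r (Fin.castLE hN i) (Fin.castLE hN (σ i))} (2 * ell r n) := by
  set S := {x | ∃ σ : Perm (Fin n), σ.IsCycle ∧ σ.support = univ ∧
      x = ∑ i, r (Fin.castLE hN i) (Fin.castLE hN (σ i))}
  have hfin : S.Finite := (Set.finite_range fun σ : Perm (Fin n) =>
    ∑ i, r (Fin.castLE hN i) (Fin.castLE hN (σ i))).subset fun _ ⟨σ, _, _, hx⟩ => ⟨σ, hx.symm⟩
  have hne : S.Nonempty :=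
    ⟨_, finRotate n, isCycle_finRotate_of_le h2, support_finRotate_of_le h2, rfl⟩
  rw [ell, dif_pos ⟨h2, hN⟩, ← mul_assoc, mul_one_div_cancel two_ne_zero, one_mul]
  exact ⟨hne.csInf_mem hfin, fun _ hx => csInf_le hfin.bddBelow hx⟩

theorem isGreatest_two_mul_depthFn {n : ℕ} (h1 : 1 ≤ n) (hN : n ≤ N) :
    IsGreatest (Set.range fun p : Fin n × Fin n => r (Fin.castLE hN p.1) (Fin.castLE hN p.2))
      (2 * depthFn r n) := by
  have : Nonempty (Fin n) := ⟨⟨0, h1⟩⟩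
  have hS : {x | ∃ i j : Fin n, x = r (Fin.castLE hN i) (Fin.castLE hN j)}
      = Set.range fun p : Fin n × Fin n => r (Fin.castLE hN p.1) (Fin.castLE hN p.2) := by
    ext; simp [eq_comm]
  rw [depthFn, dif_pos ⟨h1, hN⟩, hS, ← mul_assoc, mul_one_div_cancel two_ne_zero, one_mul]
  exact ⟨(Set.range_nonempty _).csSup_mem (Set.finite_range _),
    fun _ hx => le_csSup (Set.finite_range _).bddAbove hx⟩

theorem ell_comp_castLE {n k : ℕ} (hN : n ≤ N) (hk : k ≤ n) :
    ell (fun i j : Fin n => r (Fin.castLE hN i) (Fin.castLE hN j)) k = ell r k := by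
  by_cases h2 : 2 ≤ k
  · simp only [ell, dif_pos (And.intro h2 hk), dif_pos (And.intro h2 (hk.trans hN)),
      Fin.castLE_castLE]
  · simp only [ell, h2, false_and, dite_false]

theorem depthFn_comp_castLE {n k : ℕ} (hN : n ≤ N) (hk : k ≤ n) :
    depthFn (fun i j : Fin n => r (Fin.castLE hN i) (Fin.castLE hN j)) k = depthFn r k := by
  by_cases h1 : 1 ≤ k
  · simp only [depthFn, dif_pos (And.intro h1 hk), dif_pos (And.intro h1 (hk.trans hN)),
      Fin.castLE_castLE]
  · simp only [depthFn, h1, false_and, dite_false]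

end Spec

namespace IsUltramat

theorem comp {N k : ℕ} {r : Fin N → Fin N → ℝ} (hr : IsUltramat r) (f : Fin k → Fin N) :
    IsUltramat fun i j => r (f i) (f j) :=
  ⟨fun _ _ => hr.1 _ _, fun _ _ => hr.2.1 _ _, fun _ => hr.2.2.1 _, fun _ _ _ => hr.2.2.2 _ _ _⟩

theorem exists_le_apply_cycle {k : ℕ} {r : Fin k → Fin k → ℝ} (hr : IsUltramat r)
    {σ : Perm (Fin k)} (hc : σ.IsCycle) (hs : σ.support = univ) (x y : Fin k) :
    ∃ i, r x y ≤ r i (σ i) := by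
  by_contra! hedge
  have hxy : 0 < r x y := (hr.1 x (σ x)).trans_lt (hedge x)
  have hx : r x x < r x y := by rw [hr.2.2.1]; exact hxy
  exact lt_irrefl _ <| hc.forall_of_apply_closed hs (P := fun z => r x z < r x y)
    (fun z hz => (hr.2.2.2 x z (σ z)).trans_lt (max_lt hz (hedge z))) hx y

open Fin

variable {m : ℕ} {ρ : Fin (m + 1) → Fin (m + 1) → ℝ} {a D : ℝ}

theorem insertion_cost_ge (hρ : IsUltramat ρ)
    (ha : IsLeast (Set.range fun j : Fin m => ρ j.castSucc (last m)) a)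
    (hD : IsGreatest (Set.range fun p : Fin m × Fin m => ρ p.1.castSucc p.2.castSucc) D)
    (p s : Fin m) :
    a + max a D - D ≤ ρ p.castSucc (last m) + ρ (last m) s.castSucc - ρ p.castSucc s.castSucc := by
  have hp := ha.2 ⟨p, rfl⟩
  have hs := ha.2 ⟨s, rfl⟩
  have hps : ρ p.castSucc s.castSucc ≤ D := hD.2 ⟨(p, s), rfl⟩
  have htri := hρ.2.2.2 p.castSucc (last m) s.castSucc
  rw [hρ.2.1 (last m)] at htri ⊢
  rcases le_total a D with h | h <;>
    rcases le_total (ρ p.castSucc (last m)) (ρ s.castSucc (last m)) with h' | h' <;>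
    simp only [max_eq_left, max_eq_right, h, h'] at htri ⊢ <;> linarith

theorem exists_insertion_cost_le (hρ : IsUltramat ρ)
    (ha : IsLeast (Set.range fun j : Fin m => ρ j.castSucc (last m)) a)
    (hD : IsGreatest (Set.range fun p : Fin m × Fin m => ρ p.1.castSucc p.2.castSucc) D)
    {σ : Perm (Fin m)} (hc : σ.IsCycle) (hs : σ.support = univ) :
    ∃ i, ρ i.castSucc (last m) + ρ (last m) (σ i).castSucc - ρ i.castSucc (σ i).castSucc
      ≤ a + max a D - D := by
  by_cases hclosed : ∀ i, ρ i.castSucc (last m) ≤ a → ρ (σ i).castSucc (last m) ≤ a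
  · obtain ⟨j₀, hj₀⟩ := ha.1
    have hall : ∀ j : Fin m, ρ j.castSucc (last m) ≤ a :=
      hc.forall_of_apply_closed hs (P := fun j : Fin m => ρ j.castSucc (last m) ≤ a) hclosed hj₀.le
    obtain ⟨⟨i₀, j₁⟩, hD'⟩ := hD.1
    obtain ⟨i, hi⟩ := (hρ.comp castSucc).exists_le_apply_cycle hc hs i₀ j₁
    refine ⟨i, ?_⟩
    have := hall i
    have := hall (σ i)
    have := hρ.2.1 (last m) (σ i).castSucc
    simp only at hD' hi
    linarith [le_max_left a D]
  · push Not at hclosed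
    obtain ⟨i, hi, hσi⟩ := hclosed
    have htri := hρ.2.2.2 (σ i).castSucc i.castSucc (last m)
    have hedge : ρ (σ i).castSucc (last m) ≤ ρ (σ i).castSucc i.castSucc := by
      rcases le_max_iff.mp htri with h | h
      · exact h
      · linarith
    refine ⟨i, ?_⟩
    rw [hρ.2.1 (last m), hρ.2.1 i.castSucc (σ i).castSucc]
    linarith [le_max_right a D]

theorem isGreatest_range_succ (hρ : IsUltramat ρ)
    (ha : IsLeast (Set.range fun j : Fin m => ρ j.castSucc (last m)) a)
    (hD : IsGreatest (Set.range fun p : Fin m × Fin m => ρ p.1.castSucc p.2.castSucc) D) :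
    IsGreatest (Set.range fun p : Fin (m + 1) × Fin (m + 1) => ρ p.1 p.2) (max D a) := by
  obtain ⟨j₀, hj₀⟩ := ha.1
  obtain ⟨⟨i₀, j₁⟩, hD'⟩ := hD.1
  have hlast : ∀ z : Fin m, ρ z.castSucc (last m) ≤ max D a := fun z =>
    (hρ.2.2.2 _ j₀.castSucc _).trans (max_le_max (hD.2 ⟨(z, j₀), rfl⟩) hj₀.le)
  refine ⟨?_, ?_⟩
  · rcases max_choice D a with h | h <;> rw [h]
    · exact ⟨(i₀.castSucc, j₁.castSucc), hD'⟩
    · exact ⟨(j₀.castSucc, last m), hj₀⟩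
  · rintro _ ⟨⟨x, y⟩, rfl⟩
    dsimp only
    induction x using lastCases <;> induction y using lastCases
    · simp only [hρ.2.2.1]
      exact (hρ.1 _ _).trans (hlast j₀)
    · rw [hρ.2.1]; exact hlast _
    · exact hlast _
    · exact (hD.2 ⟨(_, _), rfl⟩).trans (le_max_left D a)

theorem ell_two {r : Fin 2 → Fin 2 → ℝ} (hr : IsUltramat r) : ell r 2 = r 0 1 := by
  obtain ⟨σ, -, hs, hσ⟩ := (isLeast_two_mul_ell r le_rfl le_rfl).1
  have hmove : ∀ x, σ x ≠ x := fun x => mem_support.mp (hs ▸ mem_univ x)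
  have h0 : σ 0 = 1 := eq_one_of_ne_zero _ (hmove 0)
  have h1 : σ 1 = 0 := by
    by_contra h
    exact hmove 1 (eq_one_of_ne_zero _ h)
  simp only [castLE_refl, sum_univ_two, h0, h1, hr.2.1 1 0] at hσ
  linarith

theorem two_mul_ell_succ (hρ : IsUltramat ρ) (hm : 1 ≤ m)
    (ha : IsLeast (Set.range fun j : Fin m => ρ j.castSucc (last m)) a)
    (hD : IsGreatest (Set.range fun p : Fin m × Fin m => ρ p.1.castSucc p.2.castSucc) D) :
    2 * ell ρ (m + 1) = 2 * ell ρ m + (a + max a D - D) := by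
  rcases hm.eq_or_lt with rfl | hm
  · obtain ⟨j, rfl⟩ := ha.1
    obtain ⟨⟨i, i'⟩, rfl⟩ := hD.1
    simp only [hρ.2.2.1, fin_one_eq_zero]
    rw [hρ.ell_two]
    simp [ell, max_eq_left (hρ.1 _ _), two_mul]
  have hℓ := isLeast_two_mul_ell ρ (n := m + 1) (by omega) le_rfl
  simp only [castLE_refl] at hℓ
  have hℓ' : IsLeast {x | ∃ σ : Perm (Fin m), σ.IsCycle ∧ σ.support = univ ∧
      x = ∑ z, ρ z.castSucc (σ z).castSucc} (2 * ell ρ m) :=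
    isLeast_two_mul_ell ρ hm m.le_succ
  apply le_antisymm
  · obtain ⟨σ, hc, hs, hσ⟩ := hℓ'.1
    obtain ⟨i, hi⟩ := hρ.exists_insertion_cost_le ha hD hc hs
    calc 2 * ell ρ (m + 1) ≤ ∑ x, ρ x (insertLast σ i x) :=
          hℓ.2 ⟨_, isCycle_insertLast i hc hs, support_insertLast i hs, rfl⟩
      _ ≤ 2 * ell ρ m + (a + max a D - D) := by
          rw [sum_insertLast, ← hσ]; linarith
  · obtain ⟨σ, hc, hs, hσ⟩ := hℓ.1
    obtain ⟨σ', hc', hs', i, rfl⟩ := exists_eq_insertLast hm hc hs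
    rw [hσ, sum_insertLast]
    linarith [hℓ'.2 ⟨σ', hc', hs', rfl⟩, hρ.insertion_cost_ge ha hD i (σ' i)]

theorem depthFn_succ (hρ : IsUltramat ρ) (hm : 1 ≤ m) :
    depthFn ρ (m + 1) = (1 / 2) * (depthFn ρ m + max (ell ρ (m + 1) - ell ρ m) (depthFn ρ m)) := by
  have : Nonempty (Fin m) := ⟨⟨0, hm⟩⟩
  obtain ⟨j₀, hj₀⟩ := Finite.exists_min fun j : Fin m => ρ j.castSucc (last m)
  have ha : IsLeast (Set.range fun j : Fin m => ρ j.castSucc (last m)) (ρ j₀.castSucc (last m)) :=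
    ⟨⟨j₀, rfl⟩, by rintro _ ⟨j, rfl⟩; exact hj₀ j⟩
  have hD : IsGreatest (Set.range fun p : Fin m × Fin m => ρ p.1.castSucc p.2.castSucc)
      (2 * depthFn ρ m) :=
    isGreatest_two_mul_depthFn ρ hm m.le_succ
  have hD₁ := isGreatest_two_mul_depthFn ρ (n := m + 1) (by omega) le_rfl
  simp only [castLE_refl] at hD₁
  have hdepth := hD₁.unique (hρ.isGreatest_range_succ ha hD)
  have hell := hρ.two_mul_ell_succ hm ha hD
  rcases le_total (ρ j₀.castSucc (last m)) (2 * depthFn ρ m) with h | h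
  · rw [max_eq_left h] at hdepth
    rw [max_eq_right h] at hell
    rw [max_eq_right (by linarith)]
    linarith
  · rw [max_eq_right h] at hdepth
    rw [max_eq_left h] at hell
    rw [max_eq_left (by linarith)]
    linarith

end IsUltramat

theorem lengthMinimal_depth_recursion_general
    {N : ℕ} (r : Fin N → Fin N → ℝ)
    (hult : IsUltramat r)
    (n : ℕ) (hn2 : 2 ≤ n) (hnN : n ≤ N) :
    depthFn r n
      = (1 / 2) * (depthFn r (n - 1)
          + max (ell r n - ell r (n - 1)) (depthFn r (n - 1))) := by
  obtain ⟨m, rfl⟩ : ∃ m, n = m + 1 := ⟨n - 1, by omega⟩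
  rw [Nat.add_sub_cancel, ← depthFn_comp_castLE r hnN le_rfl,
    ← depthFn_comp_castLE r hnN m.le_succ, ← ell_comp_castLE r hnN le_rfl,
    ← ell_comp_castLE r hnN m.le_succ]
  exact (hult.comp _).depthFn_succ (by omega)

/-- For a positive ultrametric on `{1,…,N}` whose enumeration is length-minimal, the
depths satisfy the recursion `d_n = (1/2)(d_{n−1} + max(ℓ_n − ℓ_{n−1}, d_{n−1}))` for
`2 ≤ n ≤ N`. -/
theorem lengthMinimal_depth_recursion
    {N : ℕ} (hN : 2 ≤ N) (r : Fin N → Fin N → ℝ)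
    (hult : IsUltramat r) (hpos : ∀ i j : Fin N, i ≠ j → 0 < r i j)
    (hmin : LengthMinimal r)
    (n : ℕ) (hn2 : 2 ≤ n) (hnN : n ≤ N) :
    depthFn r n
      = (1 / 2) * (depthFn r (n - 1)
          + max (ell r n - ell r (n - 1)) (depthFn r (n - 1))) :=
  lengthMinimal_depth_recursion_general r hult n hn2 hnN
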